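/- arXiv:2112.07161 — 6 statements merged into one kernel-verified Lean document; each statement's English description precedes it below -/
import Mathlib

section
/- There exists a unique group homomorphism ς : B_n → ℤ^n ⋊ S_n with ς(σ_k) = (e_k, (k, k+1)) for every k ∈ {1,…,n−1}, where e_k is the k-th standard basis vector and (k, k+1) is a transposition. Moreover, the map ι : ℤ^n ⋊ S_n → Perm({1,…,n} × ℤ) defined by ι(ℓ, π)(a, b) = (π(a), b + ℓ(π(a))) is an injective group homomorphism, and GE = ι ∘ ς. -/
/-- The braid relations. -/
def braidRels (n : ℕ) : Set (FreeGroup (Fin (n - 1))) :=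
  {r | (∃ i j : Fin (n - 1), (j : ℕ) = (i : ℕ) + 1 ∧
        r = .of i * .of j * .of i * (.of j * .of i * .of j)⁻¹) ∨
       (∃ i j : Fin (n - 1), (i : ℕ) + 2 ≤ (j : ℕ) ∧
        r = .of i * .of j * (.of j * .of i)⁻¹)}

/-- The braid group `B_n`. -/
abbrev BraidGroup (n : ℕ) := PresentedGroup (braidRels n)

/-- The Artin generator `σ_{k+1}` (0-based index `k`). -/
def braidGen {n : ℕ} (i : Fin (n - 1)) : BraidGroup n := PresentedGroup.of i

/-- The strand index `k`, viewed inside `Fin n`. -/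
def lo {n : ℕ} (k : Fin (n - 1)) : Fin n := ⟨k, by have := k.isLt; omega⟩

/-- The strand index `k + 1`, viewed inside `Fin n`. -/
def hi {n : ℕ} (k : Fin (n - 1)) : Fin n := ⟨(k : ℕ) + 1, by have := k.isLt; omega⟩

/-- The action of `S_n` on `ℤ^n` by permuting coordinates: `(π·ℓ)(i) = ℓ(π⁻¹ i)`. -/
def permAct (n : ℕ) : Equiv.Perm (Fin n) →* MulAut (Multiplicative (Fin n → ℤ)) where
  toFun π :=
    { toFun := fun ℓ => Multiplicative.ofAdd fun i => Multiplicative.toAdd ℓ (π⁻¹ i)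
      invFun := fun ℓ => Multiplicative.ofAdd fun i => Multiplicative.toAdd ℓ (π i)
      left_inv := fun ℓ => by simp
      right_inv := fun ℓ => by simp
      map_mul' := fun ℓ ℓ' => rfl }
  map_one' := by ext ℓ; simp
  map_mul' := fun π ρ => by
    ext ℓ
    simp [Equiv.Perm.mul_apply]

/-- The semidirect product `ℤ^n ⋊ S_n`. -/
abbrev GEGroup (n : ℕ) :=
  SemidirectProduct (Multiplicative (Fin n → ℤ)) (Equiv.Perm (Fin n)) (permAct n)

/-- The value `(e_k, (k, k+1))` of the Gauss-Epple homomorphism `ς` on the generator `σ_k`. -/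
def ςGen {n : ℕ} (k : Fin (n - 1)) : GEGroup n :=
  ⟨Multiplicative.ofAdd (Pi.single (lo k) 1), Equiv.swap (lo k) (hi k)⟩

/-- The Gauss-Epple permutation attached to `σ_k`. -/
def geFun {n : ℕ} (k : Fin (n - 1)) (p : Fin n × ℤ) : Fin n × ℤ :=
  if p.1 = lo k then (hi k, p.2)
  else if p.1 = hi k then (lo k, p.2 + 1)
  else p

/-! ### Auxiliary constructions and lemmas -/

/-- The injective homomorphism `ι : ℤ^n ⋊ S_n → Sym(Fin n × ℤ)`. -/
def ιhom (n : ℕ) : GEGroup n →* Equiv.Perm (Fin n × ℤ) where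
  toFun x :=
    { toFun := fun p => (x.right p.1, p.2 + Multiplicative.toAdd x.left (x.right p.1))
      invFun := fun p => (x.right⁻¹ p.1, p.2 - Multiplicative.toAdd x.left p.1)
      left_inv := fun p => by simp
      right_inv := fun p => by simp }
  map_one' := by
    ext p <;> simp [SemidirectProduct.one_left, SemidirectProduct.one_right]
  map_mul' x y := by
    ext p <;>
      simp [SemidirectProduct.mul_left, SemidirectProduct.mul_right, permAct,
        Equiv.Perm.mul_apply, toAdd_mul] <;> ring

lemma ιhom_apply {n : ℕ} (x : GEGroup n) (p : Fin n × ℤ) :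
    ιhom n x p = (x.right p.1, p.2 + Multiplicative.toAdd x.left (x.right p.1)) := rfl

lemma ιhom_injective (n : ℕ) : Function.Injective (ιhom n) := by
  intro x y h
  have key : ∀ p : Fin n × ℤ,
      (x.right p.1, p.2 + Multiplicative.toAdd x.left (x.right p.1)) =
      ((y.right p.1, p.2 + Multiplicative.toAdd y.left (y.right p.1)) : Fin n × ℤ) := by
    intro p
    have := DFunLike.congr_fun h p
    simpa [ιhom_apply] using this
  have hr : x.right = y.right := Equiv.ext fun a => congrArg Prod.fst (key (a, 0))
  have hl : x.left = y.left := by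
    apply Multiplicative.toAdd.injective
    funext a
    have h2 := congrArg Prod.snd (key ((x.right)⁻¹ a, 0))
    simp only at h2
    rw [← hr] at h2
    simpa using h2
  exact SemidirectProduct.ext hl hr

lemma ιhom_ςGen {n : ℕ} (k : Fin (n - 1)) (p : Fin n × ℤ) :
    ιhom n (ςGen k) p = geFun k p := by
  have hne : lo k ≠ hi k := by
    simp [lo, hi, Fin.ext_iff]
  rw [ιhom_apply, geFun, ςGen]
  rcases p with ⟨a, t⟩
  by_cases h1 : a = lo k
  · simp [h1, Equiv.swap_apply_left, Pi.single_apply, hne.symm]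
  · by_cases h2 : a = hi k
    · simp [h2, Equiv.swap_apply_right, Pi.single_apply, hne.symm]
    · simp [Equiv.swap_apply_of_ne_of_ne h1 h2, Pi.single_apply, h1, h2]

lemma lo_val {n : ℕ} (k : Fin (n - 1)) : ((lo k : Fin n) : ℕ) = k := rfl

lemma hi_val {n : ℕ} (k : Fin (n - 1)) : ((hi k : Fin n) : ℕ) = (k : ℕ) + 1 := rfl

lemma geFun_eq {n : ℕ} (k : Fin (n - 1)) (p : Fin n × ℤ) :
    geFun k p = if (p.1 : ℕ) = (k : ℕ) then (hi k, p.2)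
      else if (p.1 : ℕ) = (k : ℕ) + 1 then (lo k, p.2 + 1) else p := by
  simp only [geFun, Fin.ext_iff, lo_val, hi_val]

lemma geFun_braid {n : ℕ} (i j : Fin (n - 1)) (h : (j : ℕ) = (i : ℕ) + 1) (p : Fin n × ℤ) :
    geFun i (geFun j (geFun i p)) = geFun j (geFun i (geFun j p)) := by
  rcases p with ⟨a, t⟩
  have g1 : ¬((i : ℕ) + 1 + 1 = (i : ℕ)) := by omega
  have g2 : ¬((i : ℕ) + 1 + 1 = (i : ℕ) + 1) := by omega
  have g3 : ¬((i : ℕ) = (i : ℕ) + 1) := by omega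
  have g4 : ¬((i : ℕ) + 1 = (i : ℕ)) := by omega
  have g5 : ¬((i : ℕ) = (i : ℕ) + 1 + 1) := by omega
  by_cases h1 : (a : ℕ) = (i : ℕ)
  · simp [geFun_eq, hi_val, lo_val, h, h1, g1, g2, g3, g4, g5]
  · by_cases h2 : (a : ℕ) = (i : ℕ) + 1
    · simp [geFun_eq, hi_val, lo_val, h, h1, h2, g1, g2, g3, g4, g5,
        Prod.ext_iff, Fin.ext_iff]
    · by_cases h3 : (a : ℕ) = (i : ℕ) + 1 + 1
      · simp [geFun_eq, hi_val, lo_val, h, h1, h2, h3, g1, g2, g3, g4, g5,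
          Prod.ext_iff, Fin.ext_iff]
      · simp [geFun_eq, hi_val, lo_val, h, h1, h2, h3, g1, g2, g3, g4, g5]

lemma geFun_comm {n : ℕ} (i j : Fin (n - 1)) (h : (i : ℕ) + 2 ≤ (j : ℕ)) (p : Fin n × ℤ) :
    geFun i (geFun j p) = geFun j (geFun i p) := by
  rcases p with ⟨a, t⟩
  simp only [geFun_eq, lo_val, hi_val]
  split_ifs <;>
    first
      | rfl
      | omega
      | (simp only [Prod.mk.injEq, Fin.ext_iff, lo_val, hi_val] at *; omega)

lemma relations_hold (n : ℕ) :
    ∀ r ∈ braidRels n, FreeGroup.lift (ςGen (n := n)) r = 1 := by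
  have hcomp : (ιhom n).comp (FreeGroup.lift (ςGen (n := n))) =
      FreeGroup.lift (fun k => ιhom n (ςGen k)) := by
    refine FreeGroup.ext_hom _ _ fun k => ?_
    simp
  rintro r (⟨i, j, hij, rfl⟩ | ⟨i, j, hij, rfl⟩)
  · apply ιhom_injective n
    rw [map_one, ← MonoidHom.comp_apply, hcomp]
    simp only [map_mul, map_inv, FreeGroup.lift_apply_of]
    rw [mul_inv_eq_one]
    apply Equiv.ext
    intro p
    simp only [Equiv.Perm.mul_apply, ιhom_ςGen]
    exact geFun_braid i j hij p
  · apply ιhom_injective n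
    rw [map_one, ← MonoidHom.comp_apply, hcomp]
    simp only [map_mul, map_inv, FreeGroup.lift_apply_of]
    rw [mul_inv_eq_one]
    apply Equiv.ext
    intro p
    simp only [Equiv.Perm.mul_apply, ιhom_ςGen]
    exact geFun_comm i j hij p

/-- There is a unique homomorphism `ς : B_n → ℤ^n ⋊ S_n` with `ς(σ_k) = (e_k, (k,k+1))`;
moreover `ι : ℤ^n ⋊ S_n → Sym({1,…,n} × ℤ)`, `ι(ℓ,π)(a,b) = (π a, b + ℓ(π a))`, is an
injective homomorphism and `GE = ι ∘ ς`. -/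
theorem sigma_exists_unique_and_GE_factors (n : ℕ) (hn : 2 ≤ n) :
    (∃! ς : BraidGroup n →* GEGroup n,
      ∀ k : Fin (n - 1), ς (braidGen k) = ςGen k) ∧
    ∃ ι : GEGroup n →* Equiv.Perm (Fin n × ℤ),
      Function.Injective ι ∧
      (∀ (x : GEGroup n) (p : Fin n × ℤ),
        ι x p = (x.right p.1, p.2 + Multiplicative.toAdd x.left (x.right p.1))) ∧
      ∀ ς : BraidGroup n →* GEGroup n,
        (∀ k : Fin (n - 1), ς (braidGen k) = ςGen k) →
        ∀ GE : BraidGroup n →* Equiv.Perm (Fin n × ℤ),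
          (∀ (k : Fin (n - 1)) (p : Fin n × ℤ), GE (braidGen k) p = geFun k p) →
          GE = ι.comp ς := by
  constructor
  · refine ⟨PresentedGroup.toGroup (relations_hold n),
      fun k => PresentedGroup.toGroup.of _, ?_⟩
    intro g hg
    exact DFunLike.ext g _ fun x => PresentedGroup.toGroup.unique (relations_hold n) g hg
  · refine ⟨ιhom n, ιhom_injective n, fun x p => rfl, ?_⟩
    intro ς hς GE hGE
    apply PresentedGroup.ext
    intro k
    apply Equiv.ext
    intro p
    show GE (braidGen k) p = ιhom n (ς (braidGen k)) p
    rw [hς k, hGE k p, ιhom_ςGen]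
end

section
/- The Gauss-Epple action of B_n on {1,…,n} × ℤ is transitive: for all pairs (a,b) and (a',b') in {1,…,n} × ℤ there exists a braid β ∈ B_n such that GE(β)(a,b) = (a',b'). -/
/-!
Every point `(a, b)` can be pushed down to strand `0`, since `σ_k` sends `(k+1, b)` to `(k, b+1)`,
and on strand `0` the full twist `σ_0²` acts as the translation `(0, b) ↦ (0, b+1)`, so its powers
reach every level. Hence every point lies in the orbit of `(0, 0)`.
-/

theorem MonoidHom.exists_apply_eq_of_forall_exists_apply_eq {G α : Type*} [Group G]
    (φ : G →* Equiv.Perm α) (x₀ : α) (h : ∀ p, ∃ g, φ g p = x₀) (p q : α) :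
    ∃ g, φ g p = q := by
  obtain ⟨g, hg⟩ := h p
  obtain ⟨g', hg'⟩ := h q
  refine ⟨g'⁻¹ * g, ?_⟩
  rw [map_mul, map_inv, Equiv.Perm.mul_apply, hg, Equiv.Perm.inv_eq_iff_eq, hg']

theorem lo_ne_hi {n : ℕ} (k : Fin (n - 1)) : lo k ≠ hi k := by
  simp [lo, hi, Fin.ext_iff]

theorem geFun_lo {n : ℕ} (k : Fin (n - 1)) (b : ℤ) : geFun k (lo k, b) = (hi k, b) := by
  simp [geFun]

theorem geFun_hi {n : ℕ} (k : Fin (n - 1)) (b : ℤ) : geFun k (hi k, b) = (lo k, b + 1) := by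
  simp [geFun, (lo_ne_hi k).symm]

section GaussEpple

variable {n : ℕ} (GE : BraidGroup n →* Equiv.Perm (Fin n × ℤ))
  (hGE : ∀ (k : Fin (n - 1)) (p : Fin n × ℤ), GE (braidGen k) p = geFun k p)
include hGE

theorem exists_apply_eq_strand_zero (h0 : 0 < n) (a : Fin n) (b : ℤ) :
    ∃ β c, GE β (a, b) = (⟨0, h0⟩, c) := by
  obtain ⟨a, ha⟩ := a
  induction a generalizing b with
  | zero => exact ⟨1, b, by rw [map_one, Equiv.Perm.one_apply]⟩
  | succ m ih =>
    let k : Fin (n - 1) := ⟨m, by omega⟩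
    obtain ⟨β, c, hβ⟩ := ih (b + 1) (by omega)
    refine ⟨β * braidGen k, c, ?_⟩
    rw [map_mul, Equiv.Perm.mul_apply, show (⟨m + 1, ha⟩ : Fin n) = hi k from rfl, hGE, geFun_hi]
    exact hβ

theorem apply_sq_lo (k : Fin (n - 1)) (b : ℤ) :
    GE (braidGen k ^ 2) (lo k, b) = (lo k, b + 1) := by
  rw [pow_two, map_mul, Equiv.Perm.mul_apply, hGE k (lo k, b), geFun_lo, hGE, geFun_hi]

theorem apply_sq_zpow_lo (k : Fin (n - 1)) (m : ℤ) (b : ℤ) :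
    GE ((braidGen k ^ 2) ^ m) (lo k, b) = (lo k, b + m) := by
  induction m using Int.induction_on generalizing b with
  | zero => simp
  | succ i ih =>
    rw [zpow_add_one, map_mul, Equiv.Perm.mul_apply, apply_sq_lo GE hGE, ih, add_right_comm,
      add_assoc]
  | pred i ih =>
    have h_inv : (GE (braidGen k ^ 2))⁻¹ (lo k, b) = (lo k, b - 1) := by
      rw [Equiv.Perm.inv_eq_iff_eq, apply_sq_lo GE hGE, sub_add_cancel]
    rw [zpow_sub_one, map_mul, Equiv.Perm.mul_apply, map_inv, h_inv, ih]
    congr 1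
    ring

end GaussEpple

/-- The Gauss-Epple action of `B_n` on `{1,…,n} × ℤ` is transitive. -/
theorem gauss_epple_transitive (n : ℕ) (hn : 2 ≤ n)
    (GE : BraidGroup n →* Equiv.Perm (Fin n × ℤ))
    (hGE : ∀ (k : Fin (n - 1)) (p : Fin n × ℤ), GE (braidGen k) p = geFun k p)
    (p q : Fin n × ℤ) :
    ∃ β : BraidGroup n, GE β p = q := by
  let k₀ : Fin (n - 1) := ⟨0, by omega⟩
  refine GE.exists_apply_eq_of_forall_exists_apply_eq (lo k₀, 0) (fun ⟨a, b⟩ => ?_) p q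
  obtain ⟨β, c, hβ⟩ := exists_apply_eq_strand_zero GE hGE (by omega) a b
  refine ⟨(braidGen k₀ ^ 2) ^ (-c) * β, ?_⟩
  rw [map_mul, Equiv.Perm.mul_apply, hβ, show (⟨0, _⟩ : Fin n) = lo k₀ from rfl,
    apply_sq_zpow_lo GE hGE, add_neg_cancel]
end

section
/- For every pure braid β ∈ B_n, if ς(β) = (ℓ, id) then ϖ(β) = (2ℓ, id); that is, the vector part of the symmetric Gauss-Epple homomorphism of a pure braid is exactly twice the vector part of its Gauss-Epple homomorphism. -/
/-- The value `(e_k + e_{k+1}, (k, k+1))` of the symmetric Gauss-Epple homomorphism `ϖ`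
on the generator `σ_k`. -/
def ϖGen {n : ℕ} (k : Fin (n - 1)) : GEGroup n :=
  ⟨Multiplicative.ofAdd (Pi.single (lo k) 1 + Pi.single (hi k) 1),
    Equiv.swap (lo k) (hi k)⟩

section AuxGE

variable {n : ℕ}

lemma permAct_apply (π : Equiv.Perm (Fin n)) (a : Multiplicative (Fin n → ℤ)) :
    (permAct n) π a = Multiplicative.ofAdd fun i => Multiplicative.toAdd a (π⁻¹ i) := rfl

/-- The shift element `((0,1,…,n-1), id)` of `GEGroup n`. -/
def geShift (n : ℕ) : GEGroup n :=
  SemidirectProduct.inl (Multiplicative.ofAdd fun i : Fin n => (i : ℤ))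

/-- Conjugation by the shift element, computed explicitly. -/
lemma conj_by_geShift (a : Multiplicative (Fin n → ℤ)) (π : Equiv.Perm (Fin n)) :
    geShift n * (⟨a, π⟩ : GEGroup n) * (geShift n)⁻¹ =
      ⟨Multiplicative.ofAdd
        (fun i : Fin n => (i : ℤ) + Multiplicative.toAdd a i - ((π⁻¹ i : Fin n) : ℤ)), π⟩ := by
  refine SemidirectProduct.ext ?_ ?_
  · rw [SemidirectProduct.mul_left, SemidirectProduct.mul_left, SemidirectProduct.inv_left,
      SemidirectProduct.mul_right]
    have hgl : (geShift n).left = Multiplicative.ofAdd fun i : Fin n => (i : ℤ) := rfl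
    have hgr : (geShift n).right = 1 := rfl
    simp only [hgl, hgr, map_one, MulAut.one_apply, inv_one, one_mul, permAct_apply]
    refine congrArg Multiplicative.ofAdd ?_
    funext i
    simp [sub_eq_add_neg]
  · simp [geShift]

/-- Conjugation of `ς` by the shift element. -/
def ςConj (ς : BraidGroup n →* GEGroup n) : BraidGroup n →* GEGroup n :=
  (MulAut.conj (geShift n)).toMonoidHom.comp ς

lemma ςConj_apply (ς : BraidGroup n →* GEGroup n) (β : BraidGroup n) :
    ςConj ς β = geShift n * ς β * (geShift n)⁻¹ := rfl

lemma ςConj_right (ς : BraidGroup n →* GEGroup n) (β : BraidGroup n) :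
    (ςConj ς β).right = (ς β).right := by
  have : (geShift n).right = 1 := rfl
  rw [ςConj_apply, SemidirectProduct.mul_right, SemidirectProduct.mul_right,
    SemidirectProduct.inv_right, this]
  simp

lemma ςConj_gen (ς : BraidGroup n →* GEGroup n)
    (hς : ∀ k : Fin (n - 1), ς (braidGen k) = ςGen k) (k : Fin (n - 1)) :
    ςConj ς (braidGen k) =
      ⟨Multiplicative.ofAdd (Pi.single (hi k) 1), Equiv.swap (lo k) (hi k)⟩ := by
  rw [ςConj_apply, hς, ςGen, conj_by_geShift]
  refine SemidirectProduct.ext ?_ rfl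
  show Multiplicative.ofAdd _ = Multiplicative.ofAdd _
  refine congrArg Multiplicative.ofAdd ?_
  funext i
  have hlh : lo k ≠ hi k := by simp only [lo, hi, Ne, Fin.ext_iff]; omega
  simp only [toAdd_ofAdd]
  rw [Equiv.swap_inv]
  rcases eq_or_ne i (lo k) with rfl | hlo
  · rw [Equiv.swap_apply_left, Pi.single_eq_same, Pi.single_eq_of_ne hlh]
    show ((lo k : Fin n) : ℤ) + 1 - ((hi k : Fin n) : ℤ) = 0
    simp [lo, hi]
  · rcases eq_or_ne i (hi k) with rfl | hhi
    · rw [Equiv.swap_apply_right, Pi.single_eq_of_ne hlo, Pi.single_eq_same]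
      show ((hi k : Fin n) : ℤ) + 0 - ((lo k : Fin n) : ℤ) = 1
      simp [lo, hi]
    · rw [Equiv.swap_apply_of_ne_of_ne hlo hhi, Pi.single_eq_of_ne hlo,
        Pi.single_eq_of_ne hhi]
      ring

/-- Multiplying the vector parts of two homomorphisms with equal permutation parts. -/
def geCombine (f g : BraidGroup n →* GEGroup n)
    (h : ∀ β, (g β).right = (f β).right) : BraidGroup n →* GEGroup n where
  toFun β := ⟨(f β).left * (g β).left, (f β).right⟩
  map_one' := by
    refine SemidirectProduct.ext ?_ ?_ <;>
      simp [SemidirectProduct.one_left, SemidirectProduct.one_right]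
  map_mul' a b := by
    refine SemidirectProduct.ext ?_ ?_
    · show (f (a * b)).left * (g (a * b)).left = _
      rw [map_mul f, map_mul g, SemidirectProduct.mul_left, SemidirectProduct.mul_left,
        SemidirectProduct.mul_left, h a, map_mul]
      exact mul_mul_mul_comm _ _ _ _
    · show (f (a * b)).right = _
      rw [map_mul f, SemidirectProduct.mul_right, SemidirectProduct.mul_right]

end AuxGE

/-- For a pure braid `β`, if `ς(β) = (ℓ, id)` then `ϖ(β) = (2ℓ, id)`: the vector part of
the symmetric Gauss-Epple homomorphism of a pure braid is twice that of the Gauss-Epple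
homomorphism. -/
theorem symGE_eq_two_smul_GE_on_pure (n : ℕ) (hn : 2 ≤ n)
    (ς : BraidGroup n →* GEGroup n)
    (hς : ∀ k : Fin (n - 1), ς (braidGen k) = ςGen k)
    (ϖ : BraidGroup n →* GEGroup n)
    (hϖ : ∀ k : Fin (n - 1), ϖ (braidGen k) = ϖGen k)
    (β : BraidGroup n) (ℓ : Fin n → ℤ)
    (hβ : ς β = ⟨Multiplicative.ofAdd ℓ, 1⟩) :
    ϖ β = ⟨Multiplicative.ofAdd (2 • ℓ), 1⟩ := by
  have hcomb : geCombine ς (ςConj ς) (ςConj_right ς) = ϖ := by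
    apply PresentedGroup.ext
    intro k
    have hg : PresentedGroup.of (rels := braidRels n) k = braidGen k := rfl
    rw [hg, hϖ]
    show (⟨(ς (braidGen k)).left * (ςConj ς (braidGen k)).left,
        (ς (braidGen k)).right⟩ : GEGroup n) = ϖGen k
    rw [hς, ςConj_gen ς hς]
    exact SemidirectProduct.ext rfl rfl
  have hconjβ : ςConj ς β = ⟨Multiplicative.ofAdd ℓ, 1⟩ := by
    rw [ςConj_apply, hβ, conj_by_geShift]
    refine SemidirectProduct.ext ?_ rfl
    refine congrArg Multiplicative.ofAdd ?_
    funext i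
    simp
  rw [← hcomb]
  show (⟨(ς β).left * (ςConj ς β).left, (ς β).right⟩ : GEGroup n) =
    ⟨Multiplicative.ofAdd (2 • ℓ), 1⟩
  rw [hβ, hconjβ]
  refine SemidirectProduct.ext ?_ rfl
  show Multiplicative.ofAdd ℓ * Multiplicative.ofAdd ℓ = Multiplicative.ofAdd (2 • ℓ)
  rw [← ofAdd_add, two_smul]
end

section
/- There exists a unique group homomorphism SGE : B_n → Mat_n(ℤ) ⋊ S_n such that SGE(σ_i) = (O_{i,i+1}, (i, i+1)) for every i ∈ {1,…,n−1}. Equivalently, the elements (O_{i,i+1}, (i,i+1)) of Mat_n(ℤ) ⋊ S_n satisfy the braid relations: (O_{i,i+1},(i,i+1))·(O_{i+1,i+2},(i+1,i+2))·(O_{i,i+1},(i,i+1)) = (O_{i+1,i+2},(i+1,i+2))·(O_{i,i+1},(i,i+1))·(O_{i+1,i+2},(i+1,i+2)) for 1 ≤ i ≤ n−2, and the corresponding elements for non-adjacent indices commute. -/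
/-- The action of `S_n` on `n × n` integer matrices, simultaneously permuting rows and
columns: `(π·M)[i,j] = M[π⁻¹ i, π⁻¹ j]`. -/
def matPermAct (n : ℕ) :
    Equiv.Perm (Fin n) →* MulAut (Multiplicative (Matrix (Fin n) (Fin n) ℤ)) where
  toFun π :=
    { toFun := fun M => Multiplicative.ofAdd fun i j => Multiplicative.toAdd M (π⁻¹ i) (π⁻¹ j)
      invFun := fun M => Multiplicative.ofAdd fun i j => Multiplicative.toAdd M (π i) (π j)
      left_inv := fun M => by
        change (fun i j => M (π⁻¹ (π i)) (π⁻¹ (π j)) : Matrix (Fin n) (Fin n) ℤ) = M; simp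
      right_inv := fun M => by
        change (fun i j => M (π (π⁻¹ i)) (π (π⁻¹ j)) : Matrix (Fin n) (Fin n) ℤ) = M; simp
      map_mul' := fun M M' => rfl }
  map_one' := by ext M; simp
  map_mul' := fun π ρ => by
    ext M
    simp [Equiv.Perm.mul_apply]
    rfl

/-- The semidirect product `Mat_n(ℤ) ⋊ S_n`. -/
abbrev SGEGroup (n : ℕ) :=
  SemidirectProduct (Multiplicative (Matrix (Fin n) (Fin n) ℤ)) (Equiv.Perm (Fin n))
    (matPermAct n)

/-- The value `(O_{k,k+1}, (k, k+1))` of the super-Gauss-Epple homomorphism on the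
generator `σ_k`, where `O_{i,j}` is the matrix with a single `1` entry at `(i,j)`. -/
def sgeGen {n : ℕ} (k : Fin (n - 1)) : SGEGroup n :=
  ⟨Multiplicative.ofAdd (Matrix.single (lo k) (hi k) 1), Equiv.swap (lo k) (hi k)⟩

/-! The permutation parts satisfy the braid relations in `S_n`. For the matrix parts, the
permutation part of a product moves the single `1` of the next factor along: for distinct
`a, b, c` both sides of the braid relation have matrix part `O_{a,b} + O_{a,c} + O_{b,c}`, and for
disjoint transpositions both products have matrix part `O_{a,b} + O_{c,d}`. -/

namespace Equiv

variable {α : Type*} [DecidableEq α]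

theorem swap_braid {a b c : α} (hab : a ≠ b) (hac : a ≠ c) (hbc : b ≠ c) :
    swap a b * swap b c * swap a b = swap b c * swap a b * swap b c := by
  have lhs : swap a b * swap b c * swap a b = swap a c := by
    rw [swap_comm a b, swap_comm b c]
    exact swap_mul_swap_mul_swap hbc.symm hac.symm
  rw [lhs, swap_mul_swap_mul_swap hab hac, swap_comm]

theorem commute_swap_swap {a b c d : α} (hca : c ≠ a) (hcb : c ≠ b) (hda : d ≠ a)
    (hdb : d ≠ b) : Commute (swap a b) (swap c d) := by
  rw [Commute, SemiconjBy, swap_mul_eq_mul_swap, swap_inv,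
    swap_apply_of_ne_of_ne hca.symm hda.symm, swap_apply_of_ne_of_ne hcb.symm hdb.symm]

end Equiv

variable {n : ℕ}

lemma matPermAct_ofAdd_single (π : Equiv.Perm (Fin n)) (a b : Fin n) :
    matPermAct n π (Multiplicative.ofAdd (Matrix.single a b (1 : ℤ))) =
      Multiplicative.ofAdd (Matrix.single (π a) (π b) 1) :=
  congrArg Multiplicative.ofAdd (Matrix.submatrix_single_equiv π⁻¹ π⁻¹ a b 1)

def sgeElt (a b : Fin n) : SGEGroup n :=
  ⟨Multiplicative.ofAdd (Matrix.single a b 1), Equiv.swap a b⟩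

@[simp] lemma sgeElt_left (a b : Fin n) :
    (sgeElt a b).left = Multiplicative.ofAdd (Matrix.single a b 1) := rfl

@[simp] lemma sgeElt_right (a b : Fin n) : (sgeElt a b).right = Equiv.swap a b := rfl

lemma sgeElt_braid {a b c : Fin n} (hab : a ≠ b) (hac : a ≠ c) (hbc : b ≠ c) :
    sgeElt a b * sgeElt b c * sgeElt a b = sgeElt b c * sgeElt a b * sgeElt b c := by
  ext1
  · simp only [SemidirectProduct.mul_left, SemidirectProduct.mul_right, sgeElt_left, sgeElt_right,
      map_mul, MulAut.mul_apply, matPermAct_ofAdd_single, Equiv.swap_apply_left,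
      Equiv.swap_apply_right, Equiv.swap_apply_of_ne_of_ne hac.symm hbc.symm,
      Equiv.swap_apply_of_ne_of_ne hab hac, ← ofAdd_add]
    congr 1
    abel
  · simp only [SemidirectProduct.mul_right, sgeElt_right]
    exact Equiv.swap_braid hab hac hbc

lemma sgeElt_commute {a b c d : Fin n} (hca : c ≠ a) (hcb : c ≠ b) (hda : d ≠ a)
    (hdb : d ≠ b) : Commute (sgeElt a b) (sgeElt c d) := by
  ext1
  · simp only [SemidirectProduct.mul_left, sgeElt_left, sgeElt_right, matPermAct_ofAdd_single,
      Equiv.swap_apply_of_ne_of_ne hca hcb, Equiv.swap_apply_of_ne_of_ne hda hdb,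
      Equiv.swap_apply_of_ne_of_ne hca.symm hda.symm,
      Equiv.swap_apply_of_ne_of_ne hcb.symm hdb.symm, ← ofAdd_add]
    congr 1
    abel
  · simp only [SemidirectProduct.mul_right, sgeElt_right]
    exact Equiv.commute_swap_swap hca hcb hda hdb

lemma sgeGen_eq_sgeElt (k : Fin (n - 1)) : sgeGen k = sgeElt (lo k) (hi k) := rfl

lemma lo_eq_hi_of_val_eq_succ {i j : Fin (n - 1)} (h : (j : ℕ) = i + 1) : lo j = hi i := Fin.ext h

lemma sgeGen_braid {i j : Fin (n - 1)} (h : (j : ℕ) = i + 1) :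
    sgeGen i * sgeGen j * sgeGen i = sgeGen j * sgeGen i * sgeGen j := by
  simp only [sgeGen_eq_sgeElt, lo_eq_hi_of_val_eq_succ h]
  apply sgeElt_braid <;> simp only [ne_eq, Fin.ext_iff, lo, hi] <;> omega

lemma sgeGen_commute {i j : Fin (n - 1)} (h : (i : ℕ) + 2 ≤ j) :
    Commute (sgeGen i) (sgeGen j) := by
  simp only [sgeGen_eq_sgeElt]
  apply sgeElt_commute <;> simp only [ne_eq, Fin.ext_iff, lo, hi] <;> omega

lemma lift_sgeGen_eq_one_of_mem_braidRels :
    ∀ r ∈ braidRels n, FreeGroup.lift (sgeGen (n := n)) r = 1 := by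
  rintro r (⟨i, j, hij, rfl⟩ | ⟨i, j, hij, rfl⟩) <;>
    simp only [map_mul, map_inv, FreeGroup.lift_apply_of, mul_inv_eq_one]
  · exact sgeGen_braid hij
  · exact sgeGen_commute hij

theorem super_gauss_epple_exists_unique_general (n : ℕ) :
    ∃! SGE : BraidGroup n →* SGEGroup n,
      ∀ k : Fin (n - 1), SGE (braidGen k) = sgeGen k :=
  ⟨PresentedGroup.toGroup lift_sgeGen_eq_one_of_mem_braidRels,
    fun _ ↦ PresentedGroup.toGroup.of _,
    fun _ hSGE ↦ PresentedGroup.ext fun k ↦ (hSGE k).trans (PresentedGroup.toGroup.of _).symm⟩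

/-- There is a unique group homomorphism `SGE : B_n → Mat_n(ℤ) ⋊ S_n` with
`SGE(σ_k) = (O_{k,k+1}, (k,k+1))`; equivalently, these elements of `Mat_n(ℤ) ⋊ S_n`
satisfy the braid relations. -/
theorem super_gauss_epple_exists_unique (n : ℕ) (hn : 2 ≤ n) :
    ∃! SGE : BraidGroup n →* SGEGroup n,
      ∀ k : Fin (n - 1), SGE (braidGen k) = sgeGen k :=
  super_gauss_epple_exists_unique_general n
end

section
/- There exists a function F : W → (Φ → ℤ) such that: (i) for each simple root α ∈ Δ, F(r_α) = 1_α − 1_{−α} (the function taking value 1 at α, value −1 at −α, and 0 elsewhere); (ii) F is a 1-cocycle: F(uv)(φ) = F(u)(φ) + F(v)(u⁻¹φ) for all u, v ∈ W and φ ∈ Φ; and (iii) F(w)(φ) ∈ {0, 1} for every w ∈ W and every positive root φ ∈ Φ⁺. -/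
open RealInnerProductSpace

/-- Reflection in the hyperplane orthogonal to `v`:
`ρ_v(x) = x - 2(⟪v,x⟫/⟪v,v⟫) v`. -/
noncomputable def reflFun {V : Type*} [NormedAddCommGroup V] [InnerProductSpace ℝ V]
    (v x : V) : V :=
  x - ((2 * ⟪v, x⟫ / ⟪v, v⟫) • v)

theorem reflFun_involutive {V : Type*} [NormedAddCommGroup V] [InnerProductSpace ℝ V]
    {v : V} (hv : v ≠ 0) (x : V) : reflFun v (reflFun v x) = x := by
  have h : ⟪v, v⟫ ≠ (0 : ℝ) := inner_self_ne_zero.mpr hv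
  simp only [reflFun, inner_sub_right, inner_smul_right]
  field_simp
  ring_nf
  module

/-- The reflection `ρ_v` as a permutation (bijection) of `V`, for `v ≠ 0`. -/
noncomputable def reflPerm {V : Type*} [NormedAddCommGroup V] [InnerProductSpace ℝ V]
    (v : V) (hv : v ≠ 0) : Equiv.Perm V :=
  ⟨reflFun v, reflFun v, reflFun_involutive hv, reflFun_involutive hv⟩

/-- The set of reflections in the simple roots `Δ ⊆ Φ` (the generators of `W`). -/
noncomputable def simpleRefls {V : Type*} [NormedAddCommGroup V] [InnerProductSpace ℝ V]
    (Φ Δ : Set V) (h0 : (0 : V) ∉ Φ) (hΔ : Δ ⊆ Φ) : Set (Equiv.Perm V) :=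
  {g | ∃ (α : V) (hα : α ∈ Δ), g = reflPerm α fun h => h0 (h ▸ hΔ hα)}

/-!
Let `χ` be the indicator of the cone `posCone Δ` of nonnegative combinations of simple roots.
The coboundary `F(w)(φ) = χ(φ) - χ(w⁻¹φ)` is a cocycle for free and takes values in `{0, 1}`
on the cone. Its value on a simple reflection `r_α` comes from the classical fact that `r_α`
permutes the positive roots other than `α`: such a root has a positive coefficient at some
other simple root (this is where reducedness enters), `r_α` only changes the coefficient at
`α`, and a root with one positive coefficient is positive.
-/

section PosCone

variable {M : Type*} [AddCommGroup M] [Module ℝ M]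

def posCone (Δ : Set M) : Set M :=
  {x | ∃ c : Δ →₀ ℝ, Finsupp.linearCombination ℝ ((↑) : Δ → M) c = x ∧ ∀ a, 0 ≤ c a}

variable {Δ : Set M}

lemma subset_posCone : Δ ⊆ posCone Δ := fun a ha => by
  classical
  exact ⟨Finsupp.single ⟨a, ha⟩ 1, by simp, fun b => by
    rw [Finsupp.single_apply]; split_ifs <;> norm_num⟩

lemma eq_zero_of_mem_posCone_of_neg_mem (hind : LinearIndependent ℝ ((↑) : Δ → M)) {x : M}
    (hx : x ∈ posCone Δ) (hnx : -x ∈ posCone Δ) : x = 0 := by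
  obtain ⟨c, rfl, hc⟩ := hx
  obtain ⟨d, hd, hd_nonneg⟩ := hnx
  have hcd : c + d = 0 := hind (by simp [hd])
  have hc0 : c = 0 := by
    ext a
    show c a = 0
    have := congrArg (· a) hcd
    simp only [Finsupp.add_apply, Finsupp.coe_zero, Pi.zero_apply] at this
    linarith [hc a, hd_nonneg a]
  simp [hc0]

lemma neg_notMem_posCone (hind : LinearIndependent ℝ ((↑) : Δ → M)) {a : M} (ha : a ∈ Δ) :
    -a ∉ posCone Δ := fun hna =>
  hind.ne_zero ⟨a, ha⟩ (eq_zero_of_mem_posCone_of_neg_mem hind (subset_posCone ha) hna)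

noncomputable def posIndicator (Δ : Set M) : M → ℤ :=
  (posCone Δ).indicator 1

lemma posIndicator_sub_mem_of_mem_posCone {x : M} (hx : x ∈ posCone Δ) (y : M) :
    posIndicator Δ x - posIndicator Δ y ∈ ({0, 1} : Set ℤ) := by
  rw [posIndicator, Set.indicator_of_mem hx]
  by_cases hy : y ∈ posCone Δ
  · simp [Set.indicator_of_mem hy]
  · simp [Set.indicator_of_notMem hy]

end PosCone

section Reflection

variable {V : Type*} [NormedAddCommGroup V] [InnerProductSpace ℝ V]

lemma reflFun_self {v : V} (hv : v ≠ 0) : reflFun v v = -v := by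
  have h : ⟪v, v⟫ ≠ (0 : ℝ) := inner_self_ne_zero.mpr hv
  rw [reflFun, mul_div_assoc, div_self h, mul_one]
  module

lemma reflFun_neg_self {v : V} (hv : v ≠ 0) : reflFun v (-v) = v := by
  rw [← reflFun_self hv, reflFun_involutive hv]

lemma reflPerm_inv_apply {v : V} (hv : v ≠ 0) (x : V) : (reflPerm v hv)⁻¹ x = reflFun v x :=
  rfl

end Reflection

section RootSystem

variable {V : Type*} [NormedAddCommGroup V] [InnerProductSpace ℝ V] {Φ Δ : Set V}

lemma exists_ne_coeff_pos
    (hred : ∀ α ∈ Φ, ∀ t : ℝ, t • α ∈ Φ → t • α = α ∨ t • α = -α)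
    {α : V} (hαΔ : α ∈ Δ) (hαΦ : α ∈ Φ) (hα : α ≠ 0) {c : Δ →₀ ℝ} (hc : ∀ a, 0 ≤ c a)
    (hcΦ : Finsupp.linearCombination ℝ ((↑) : Δ → V) c ∈ Φ)
    (hne : Finsupp.linearCombination ℝ ((↑) : Δ → V) c ≠ α) :
    ∃ a, a ≠ ⟨α, hαΔ⟩ ∧ 0 < c a := by
  classical
  by_contra! hall
  have hc_single : c = Finsupp.single ⟨α, hαΔ⟩ (c ⟨α, hαΔ⟩) := by
    ext a
    rw [Finsupp.single_apply]
    split_ifs with ha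
    · rw [ha]
    · exact le_antisymm (hall a (Ne.symm ha)) (hc a)
  set t := c ⟨α, hαΔ⟩
  have hcomb : Finsupp.linearCombination ℝ ((↑) : Δ → V) c = t • α := by
    rw [hc_single, Finsupp.linearCombination_single]
  rw [hcomb] at hcΦ hne
  have ht : t • α = -α := (hred α hαΦ t hcΦ).resolve_left hne
  have ht1 : t + 1 = 0 := by
    refine (smul_eq_zero.mp ?_).resolve_right hα
    rw [add_smul, ht, one_smul, neg_add_cancel]
  linarith [hc ⟨α, hαΔ⟩]

lemma mem_posCone_of_coeff_pos (hind : LinearIndependent ℝ ((↑) : Δ → V))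
    {x : V} (hx : ∃ d : Δ →₀ ℝ, Finsupp.linearCombination ℝ ((↑) : Δ → V) d = x ∧
      ((∀ a, 0 ≤ d a) ∨ (∀ a, d a ≤ 0)))
    {c : Δ →₀ ℝ} (hc : Finsupp.linearCombination ℝ ((↑) : Δ → V) c = x) {a : Δ}
    (ha : 0 < c a) : x ∈ posCone Δ := by
  obtain ⟨d, hd, hd_nonneg | hd_nonpos⟩ := hx
  · exact ⟨d, hd, hd_nonneg⟩
  · have hdc : d = c := hind (hd.trans hc.symm)
    exact absurd (hd_nonpos a) (by rw [hdc]; exact not_le.mpr ha)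

variable (hred : ∀ α ∈ Φ, ∀ t : ℝ, t • α ∈ Φ → t • α = α ∨ t • α = -α)
  (hstab : ∀ α ∈ Φ, ∀ φ ∈ Φ, reflFun α φ ∈ Φ) (hΔ : Δ ⊆ Φ)
  (hind : LinearIndependent ℝ ((↑) : Δ → V))
  (hsimple : ∀ φ ∈ Φ, ∃ c : Δ →₀ ℝ, Finsupp.linearCombination ℝ ((↑) : Δ → V) c = φ ∧
    ((∀ a, 0 ≤ c a) ∨ (∀ a, c a ≤ 0)))
include hred hstab hΔ hind hsimple

lemma reflFun_mem_posCone {α : V} (hα : α ∈ Δ) {φ : V} (hφ : φ ∈ Φ) (hφpos : φ ∈ posCone Δ)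
    (hne : φ ≠ α) : reflFun α φ ∈ posCone Δ := by
  obtain ⟨c, rfl, hc⟩ := hφpos
  obtain ⟨a, ha, hca⟩ :=
    exists_ne_coeff_pos hred hα (hΔ hα) (hind.ne_zero ⟨α, hα⟩) hc hφ hne
  let k : ℝ := 2 * ⟪α, Finsupp.linearCombination ℝ ((↑) : Δ → V) c⟫ / ⟪α, α⟫
  have hrefl : Finsupp.linearCombination ℝ ((↑) : Δ → V) (c - Finsupp.single ⟨α, hα⟩ k) =
      reflFun α (Finsupp.linearCombination ℝ ((↑) : Δ → V) c) := by
    rw [map_sub, Finsupp.linearCombination_single]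
    rfl
  refine mem_posCone_of_coeff_pos hind (hsimple _ (hstab α (hΔ hα) _ hφ)) hrefl
    (a := a) ?_
  rwa [Finsupp.sub_apply, Finsupp.single_eq_of_ne ha, sub_zero]

lemma reflFun_mem_posCone_iff {α : V} (hα : α ∈ Δ) {φ : V} (hφ : φ ∈ Φ) (hne : φ ≠ α)
    (hne' : φ ≠ -α) : reflFun α φ ∈ posCone Δ ↔ φ ∈ posCone Δ := by
  have hα0 : α ≠ 0 := hind.ne_zero ⟨α, hα⟩
  refine ⟨fun h => ?_, fun h => reflFun_mem_posCone hred hstab hΔ hind hsimple hα hφ h hne⟩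
  have hrne : reflFun α φ ≠ α := fun h' => hne' <| by
    rw [← reflFun_involutive hα0 φ, h', reflFun_self hα0]
  simpa only [reflFun_involutive hα0] using
    reflFun_mem_posCone hred hstab hΔ hind hsimple hα (hstab α (hΔ hα) φ hφ) h hrne

open Classical in
lemma posIndicator_sub_posIndicator_reflFun {α : V} (hα : α ∈ Δ) {φ : V} (hφ : φ ∈ Φ) :
    posIndicator Δ φ - posIndicator Δ (reflFun α φ) =
      if φ = α then 1 else if φ = -α then -1 else 0 := by
  have hα0 : α ≠ 0 := hind.ne_zero ⟨α, hα⟩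
  have hpos := subset_posCone hα
  have hneg := neg_notMem_posCone hind hα
  split_ifs with h h'
  · simp [posIndicator, h, reflFun_self hα0, hpos, hneg]
  · simp [posIndicator, h', reflFun_neg_self hα0, hpos, hneg]
  · simp only [posIndicator, Set.indicator_apply, Pi.one_apply,
      reflFun_mem_posCone_iff hred hstab hΔ hind hsimple hα hφ h h', sub_self]

end RootSystem

open Classical in
theorem exists_cocycle_root_system_general
    {V : Type*} [NormedAddCommGroup V] [InnerProductSpace ℝ V]
    (Φ : Set V) (h0 : (0 : V) ∉ Φ)
    (hred : ∀ α ∈ Φ, ∀ t : ℝ, t • α ∈ Φ → t • α = α ∨ t • α = -α)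
    (hstab : ∀ α ∈ Φ, ∀ φ ∈ Φ, reflFun α φ ∈ Φ)
    (Δ : Set V) (hΔ : Δ ⊆ Φ)
    (hind : LinearIndependent ℝ ((↑) : Δ → V))
    (hsimple : ∀ φ ∈ Φ, ∃ c : Δ →₀ ℝ, (c.sum fun a r => r • (a : V)) = φ ∧
      ((∀ a, 0 ≤ c a) ∨ (∀ a, c a ≤ 0))) :
    ∃ F : (Subgroup.closure (simpleRefls Φ Δ h0 hΔ)) → V → ℤ,
      (∀ (α : V) (hα : α ∈ Δ) (g : Subgroup.closure (simpleRefls Φ Δ h0 hΔ)),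
        (g : Equiv.Perm V) = reflPerm α (fun h => h0 (h ▸ hΔ hα)) →
        ∀ φ ∈ Φ, F g φ = if φ = α then 1 else if φ = -α then -1 else 0) ∧
      (∀ u v : Subgroup.closure (simpleRefls Φ Δ h0 hΔ), ∀ φ ∈ Φ,
        F (u * v) φ = F u φ + F v ((u : Equiv.Perm V)⁻¹ φ)) ∧
      (∀ g : Subgroup.closure (simpleRefls Φ Δ h0 hΔ), ∀ φ ∈ Φ,
        (∃ c : Δ →₀ ℝ, (c.sum fun a r => r • (a : V)) = φ ∧ ∀ a, 0 ≤ c a) →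
        F g φ ∈ ({0, 1} : Set ℤ)) := by
  simp only [← Finsupp.linearCombination_apply] at hsimple ⊢
  refine ⟨fun g φ => posIndicator Δ φ - posIndicator Δ ((g : Equiv.Perm V)⁻¹ φ), ?_, ?_, ?_⟩
  · rintro α hα g hg φ hφ
    dsimp only
    rw [hg, reflPerm_inv_apply]
    exact posIndicator_sub_posIndicator_reflFun hred hstab hΔ hind hsimple hα hφ
  · intro u v φ _
    simp only [Subgroup.coe_mul, mul_inv_rev, Equiv.Perm.mul_apply, sub_add_sub_cancel]
  · rintro g φ _ hφpos
    exact posIndicator_sub_mem_of_mem_posCone hφpos _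

open Classical in
/-- Let `Φ` be a finite reduced root system in a real inner product space `V`, with simple
system `Δ` and positive roots `Φ⁺`, and let `W` be the group generated by the reflections
in the simple roots. Then there is a function `F : W → (Φ → ℤ)` such that (i)
`F(r_α) = 1_α - 1_{-α}` for each simple root `α`; (ii) `F` is a 1-cocycle:
`F(uv)(φ) = F(u)(φ) + F(v)(u⁻¹ φ)`; and (iii) `F(w)(φ) ∈ {0,1}` for every `w ∈ W` and
every positive root `φ ∈ Φ⁺`. -/
theorem exists_cocycle_root_system
    {V : Type*} [NormedAddCommGroup V] [InnerProductSpace ℝ V]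
    (Φ : Set V) (hfin : Φ.Finite) (h0 : (0 : V) ∉ Φ)
    (hneg : ∀ α ∈ Φ, -α ∈ Φ)
    (hred : ∀ α ∈ Φ, ∀ t : ℝ, t • α ∈ Φ → t • α = α ∨ t • α = -α)
    (hstab : ∀ α ∈ Φ, ∀ φ ∈ Φ, reflFun α φ ∈ Φ)
    (Δ : Set V) (hΔ : Δ ⊆ Φ)
    (hind : LinearIndependent ℝ ((↑) : Δ → V))
    (hsimple : ∀ φ ∈ Φ, ∃ c : Δ →₀ ℝ, (c.sum fun a r => r • (a : V)) = φ ∧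
      ((∀ a, 0 ≤ c a) ∨ (∀ a, c a ≤ 0))) :
    ∃ F : (Subgroup.closure (simpleRefls Φ Δ h0 hΔ)) → V → ℤ,
      (∀ (α : V) (hα : α ∈ Δ) (g : Subgroup.closure (simpleRefls Φ Δ h0 hΔ)),
        (g : Equiv.Perm V) = reflPerm α (fun h => h0 (h ▸ hΔ hα)) →
        ∀ φ ∈ Φ, F g φ = if φ = α then 1 else if φ = -α then -1 else 0) ∧
      (∀ u v : Subgroup.closure (simpleRefls Φ Δ h0 hΔ), ∀ φ ∈ Φ,
        F (u * v) φ = F u φ + F v ((u : Equiv.Perm V)⁻¹ φ)) ∧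
      (∀ g : Subgroup.closure (simpleRefls Φ Δ h0 hΔ), ∀ φ ∈ Φ,
        (∃ c : Δ →₀ ℝ, (c.sum fun a r => r • (a : V)) = φ ∧ ∀ a, 0 ≤ c a) →
        F g φ ∈ ({0, 1} : Set ℤ)) :=
  exists_cocycle_root_system_general Φ h0 hred hstab Δ hΔ hind hsimple
end

section
/- If v₁ and v₂ are unit vectors with ⟨v₁, v₂⟩ = −√3/2 (angle 150°), then the multisets {v₁, ρ_{v₁}v₂, ρ_{v₁}ρ_{v₂}v₁, ρ_{v₁}ρ_{v₂}ρ_{v₁}v₂, ρ_{v₁}ρ_{v₂}ρ_{v₁}ρ_{v₂}v₁, ρ_{v₁}ρ_{v₂}ρ_{v₁}ρ_{v₂}ρ_{v₁}v₂} and {v₂, ρ_{v₂}v₁, ρ_{v₂}ρ_{v₁}v₂, ρ_{v₂}ρ_{v₁}ρ_{v₂}v₁, ρ_{v₂}ρ_{v₁}ρ_{v₂}ρ_{v₁}v₂, ρ_{v₂}ρ_{v₁}ρ_{v₂}ρ_{v₁}ρ_{v₂}v₁} are equal. -/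
/-!
Write `t = -2⟪v₁, v₂⟫`. On combinations `a • v₁ + b • v₂` the reflections act by
`ρ_{v₁} : (a, b) ↦ (t b - a, b)` and `ρ_{v₂} : (a, b) ↦ (a, t a - b)`, so as soon as `t² = 3`
the six vectors obtained from `v₁` are `v₁, v₂ + t v₁, 2 v₁ + t v₂, 2 v₂ + t v₁, v₁ + t v₂, v₂`.
Exchanging `v₁` and `v₂` reverses this list, so the two multisets coincide.
-/

open RealInnerProductSpace

section

variable {V : Type*} [NormedAddCommGroup V] [InnerProductSpace ℝ V] {v₁ v₂ : V}

theorem reflFun_of_inner_self_eq_one {v : V} (hv : ⟪v, v⟫ = 1) (x : V) :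
    reflFun v x = x - (2 * ⟪v, x⟫) • v := by
  rw [reflFun, hv, div_one]

theorem reflFun_smul_add_smul (h₁ : ⟪v₁, v₁⟫ = 1) (a b : ℝ) :
    reflFun v₁ (a • v₁ + b • v₂) = (-a - 2 * ⟪v₁, v₂⟫ * b) • v₁ + b • v₂ := by
  rw [reflFun_of_inner_self_eq_one h₁, inner_add_right, inner_smul_right, inner_smul_right, h₁]
  module

theorem reflFun_alternating_orbit (h₁ : ⟪v₁, v₁⟫ = 1) (h₂ : ⟪v₂, v₂⟫ = 1) {t : ℝ}
    (ht : t ^ 2 = 3) (h : ⟪v₁, v₂⟫ = -(t / 2)) :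
    reflFun v₁ v₂ = v₂ + t • v₁ ∧
      reflFun v₁ (reflFun v₂ v₁) = (2 : ℝ) • v₁ + t • v₂ ∧
      reflFun v₁ (reflFun v₂ (reflFun v₁ v₂)) = (2 : ℝ) • v₂ + t • v₁ ∧
      reflFun v₁ (reflFun v₂ (reflFun v₁ (reflFun v₂ v₁))) = v₁ + t • v₂ ∧
      reflFun v₁ (reflFun v₂ (reflFun v₁ (reflFun v₂ (reflFun v₁ v₂)))) = v₂ := by
  have step₁ (a b : ℝ) : reflFun v₁ (a • v₁ + b • v₂) = (t * b - a) • v₁ + b • v₂ := by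
    rw [reflFun_smul_add_smul h₁, h]; module
  have step₂ (a b : ℝ) : reflFun v₂ (a • v₁ + b • v₂) = a • v₁ + (t * a - b) • v₂ := by
    rw [add_comm, reflFun_smul_add_smul h₂, real_inner_comm, h]; module
  have start₁ : reflFun v₁ v₂ = t • v₁ + (1 : ℝ) • v₂ := by
    simpa using step₁ 0 1
  have start₂ : reflFun v₂ v₁ = (1 : ℝ) • v₁ + t • v₂ := by
    simpa using step₂ 1 0
  simp only [start₁, start₂, step₁, step₂]
  refine ⟨?_, ?_, ?_, ?_, ?_⟩ <;> match_scalars <;> grind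

end

theorem Multiset.insert_six_eq_reverse {α : Type*} (a b c d e f : α) :
    ({a, b, c, d, e, f} : Multiset α) = {f, e, d, c, b, a} :=
  Multiset.coe_reverse [f, e, d, c, b, a]

/-- For unit vectors at angle `150°` (`⟪v₁,v₂⟫ = -√3/2`), the two multisets of six
vectors obtained by alternately applying the reflections `ρ_{v₁}` and `ρ_{v₂}` starting
from `v₁` resp. `v₂` agree. -/
theorem braid_relation_length_six
    {V : Type*} [NormedAddCommGroup V] [InnerProductSpace ℝ V]
    (v₁ v₂ : V) (h₁ : ‖v₁‖ = 1) (h₂ : ‖v₂‖ = 1)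
    (h : ⟪v₁, v₂⟫ = -(Real.sqrt 3 / 2)) :
    ({v₁, reflFun v₁ v₂, reflFun v₁ (reflFun v₂ v₁),
        reflFun v₁ (reflFun v₂ (reflFun v₁ v₂)),
        reflFun v₁ (reflFun v₂ (reflFun v₁ (reflFun v₂ v₁))),
        reflFun v₁ (reflFun v₂ (reflFun v₁ (reflFun v₂ (reflFun v₁ v₂))))} : Multiset V) =
      {v₂, reflFun v₂ v₁, reflFun v₂ (reflFun v₁ v₂),
        reflFun v₂ (reflFun v₁ (reflFun v₂ v₁)),
        reflFun v₂ (reflFun v₁ (reflFun v₂ (reflFun v₁ v₂))),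
        reflFun v₂ (reflFun v₁ (reflFun v₂ (reflFun v₁ (reflFun v₂ v₁))))} := by
  have inner_self_eq_one {v : V} (hv : ‖v‖ = 1) : ⟪v, v⟫ = 1 := by
    rw [real_inner_self_eq_norm_sq, hv, one_pow]
  have hsqrt : Real.sqrt 3 ^ 2 = 3 := Real.sq_sqrt (by norm_num)
  obtain ⟨l₁, l₂, l₃, l₄, l₅⟩ :=
    reflFun_alternating_orbit (inner_self_eq_one h₁) (inner_self_eq_one h₂) hsqrt h
  obtain ⟨r₁, r₂, r₃, r₄, r₅⟩ :=
    reflFun_alternating_orbit (inner_self_eq_one h₂) (inner_self_eq_one h₁) hsqrt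
      (by rwa [real_inner_comm])
  rw [l₅, r₅, l₄, r₄, l₃, r₃, l₂, r₂, l₁, r₁]
  exact Multiset.insert_six_eq_reverse _ _ _ _ _ _
end
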